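/- arXiv:0804.1056 — 2 statements merged into one kernel-verified Lean document; each statement's English description precedes it below -/
import Mathlib

section
/- Identifiability of the semiparametric convolution model: Let f₁ and f₂ be probability densities in L¹(ℝ), each satisfying Assumption (A), i.e. for i = 1,2 there exist Aᵢ > 0, βᵢ' > 0 and uᵢ > 0 with |Φ^{fᵢ}(u)| ≥ Aᵢ|u|^{−βᵢ'} for all |u| ≥ uᵢ. Let s₁, s₂ ∈ (0,2] and γ₁, γ₂ > 0. If Φ^{f₁}(u)·exp(−|γ₁u|^{s₁}) = Φ^{f₂}(u)·exp(−|γ₂u|^{s₂}) for all u ∈ ℝ, then s₁ = s₂, γ₁ = γ₂ and Φ^{f₁} = Φ^{f₂} (hence f₁ = f₂ almost everywhere). -/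
/-!
Taking moduli in the identity and using `A u^{-β'} ≤ |Φ^{fᵢ}(u)| ≤ 1` gives, for large `u`,
`(γ₂u)^{s₂} ≤ (γ₁u)^{s₁} + β₁' log u - log A₁` and symmetrically. Since `log u = o(u^s)`, these
force `(s₁, γ₁)` and `(s₂, γ₂)` to agree, after which the exponential factors cancel. Finally
`Φ^f` is the characteristic function of the probability measure with density `f`, and
characteristic functions determine finite measures.
-/

open MeasureTheory Real Complex

/-- The Fourier transform `Φ^f(u) = ∫ e^{iux} f(x) dx` of a density `f`. -/
noncomputable def FT (f : ℝ → ℝ) (u : ℝ) : ℂ :=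
  ∫ x : ℝ, Complex.exp (Complex.I * u * x) * (f x)

open Filter Asymptotics

theorem isLittleO_rpow_rpow_atTop_of_lt {r s : ℝ} (h : r < s) :
    (fun x : ℝ => x ^ r) =o[atTop] fun x => x ^ s := by
  refine (isLittleO_iff_tendsto' ?_).2 ?_
  · filter_upwards [eventually_gt_atTop 0] with x hx h0
    exact absurd h0 (by positivity)
  · refine (tendsto_rpow_neg_atTop (sub_pos.2 h)).congr' ?_
    filter_upwards [eventually_gt_atTop 0] with x hx
    rw [neg_sub, Real.rpow_sub hx]

theorem tendsto_const_mul_rpow_sub_atTop {c s : ℝ} (hc : 0 < c) (hs : 0 < s) {g : ℝ → ℝ}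
    (hg : g =o[atTop] fun x => x ^ s) :
    Tendsto (fun u => c * u ^ s - g u) atTop atTop := by
  have hequiv : (fun u => -g u + c * u ^ s) ~[atTop] fun u => c * u ^ s :=
    hg.neg_left.const_mul_right' (isUnit_iff_ne_zero.2 hc.ne') |>.add_isEquivalent
      IsEquivalent.refl
  simpa only [neg_add_eq_sub] using
    hequiv.symm.tendsto_atTop ((tendsto_rpow_atTop hs).const_mul_atTop hc)

theorem le_and_le_of_eventually_rpow_le {s₁ s₂ γ₁ γ₂ β C : ℝ} (hs₂ : 0 < s₂)
    (hγ₁ : 0 < γ₁) (hγ₂ : 0 < γ₂)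
    (h : ∀ᶠ u in atTop, (γ₂ * u) ^ s₂ ≤ (γ₁ * u) ^ s₁ + β * Real.log u + C) :
    s₂ ≤ s₁ ∧ (s₂ = s₁ → γ₂ ≤ γ₁) := by
  by_contra hlex
  have hgap : Tendsto (fun u => γ₂ ^ s₂ * u ^ s₂ - (γ₁ ^ s₁ * u ^ s₁ + β * Real.log u))
      atTop atTop := by
    rcases not_and_or.1 hlex with hs | hγ
    · refine tendsto_const_mul_rpow_sub_atTop (by positivity) hs₂ ?_
      exact ((isLittleO_rpow_rpow_atTop_of_lt (not_le.1 hs)).const_mul_left _).add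
        ((isLittleO_log_rpow_atTop hs₂).const_mul_left _)
    · obtain ⟨rfl, hγlt⟩ := Classical.not_imp.1 hγ
      have hc : 0 < γ₂ ^ s₂ - γ₁ ^ s₂ := sub_pos.2 (rpow_lt_rpow hγ₁.le (not_le.1 hγlt) hs₂)
      refine (tendsto_const_mul_rpow_sub_atTop hc hs₂
        ((isLittleO_log_rpow_atTop hs₂).const_mul_left β)).congr fun u => by ring
  obtain ⟨u, hu, hu0, hbig⟩ :=
    (h.and ((eventually_ge_atTop 0).and (hgap.eventually_gt_atTop C))).exists
  rw [mul_rpow hγ₁.le hu0, mul_rpow hγ₂.le hu0] at hu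
  linarith

theorem eventually_rpow_le_of_mul_exp_eq {φ ψ : ℝ → ℂ} {A β u₀ γ₁ γ₂ s₁ s₂ : ℝ} (hA : 0 < A)
    (hφ : ∀ u : ℝ, u₀ ≤ |u| → A * |u| ^ (-β) ≤ ‖φ u‖) (hψ : ∀ u, ‖ψ u‖ ≤ 1)
    (hγ₁ : 0 < γ₁) (hγ₂ : 0 < γ₂)
    (h : ∀ u : ℝ, φ u * Real.exp (-|γ₁ * u| ^ s₁) = ψ u * Real.exp (-|γ₂ * u| ^ s₂)) :
    ∀ᶠ u in atTop, (γ₂ * u) ^ s₂ ≤ (γ₁ * u) ^ s₁ + β * Real.log u + -Real.log A := by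
  filter_upwards [eventually_gt_atTop 0, eventually_ge_atTop u₀] with u hu hu₀
  have hnorm := congrArg norm (h u)
  simp only [norm_mul, Complex.norm_real, norm_of_nonneg (exp_pos _).le,
    abs_of_pos (mul_pos hγ₁ hu), abs_of_pos (mul_pos hγ₂ hu)] at hnorm
  have hφu := hφ u (by rwa [abs_of_pos hu])
  rw [abs_of_pos hu] at hφu
  have key : A * u ^ (-β) * exp (-(γ₁ * u) ^ s₁) ≤ exp (-(γ₂ * u) ^ s₂) :=
    calc A * u ^ (-β) * exp (-(γ₁ * u) ^ s₁) ≤ ‖φ u‖ * exp (-(γ₁ * u) ^ s₁) := by gcongr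
      _ = ‖ψ u‖ * exp (-(γ₂ * u) ^ s₂) := hnorm
      _ ≤ exp (-(γ₂ * u) ^ s₂) := mul_le_of_le_one_left (exp_pos _).le (hψ u)
  have hlog := log_le_log (by positivity) key
  rw [Real.log_exp, Real.log_mul (by positivity) (exp_ne_zero _),
    Real.log_mul hA.ne' (by positivity), Real.log_exp, Real.log_rpow hu] at hlog
  linarith

theorem FT_eq_charFun {f : ℝ → ℝ} (hf : Integrable f) (hnn : ∀ x, 0 ≤ f x) :
    FT f = charFun (volume.withDensity fun x => ENNReal.ofReal (f x)) := by
  ext u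
  rw [charFun_apply, integral_withDensity_eq_integral_toReal_smul₀
    hf.aemeasurable.ennreal_ofReal (ae_of_all _ fun _ => ENNReal.ofReal_lt_top)]
  refine integral_congr_ae (ae_of_all _ fun x => ?_)
  simp only [ENNReal.toReal_ofReal (hnn x), Complex.real_smul, Real.inner_apply]
  push_cast
  ring_nf

theorem isProbabilityMeasure_withDensity_ofReal {f : ℝ → ℝ} (hf : Integrable f)
    (hnn : ∀ x, 0 ≤ f x) (hmass : ∫ x, f x = 1) :
    IsProbabilityMeasure (volume.withDensity fun x => ENNReal.ofReal (f x)) := by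
  constructor
  rw [withDensity_apply _ MeasurableSet.univ, Measure.restrict_univ,
    ← ofReal_integral_eq_lintegral_ofReal hf (ae_of_all _ hnn), hmass, ENNReal.ofReal_one]

theorem norm_FT_le_one {f : ℝ → ℝ} (hf : Integrable f) (hnn : ∀ x, 0 ≤ f x)
    (hmass : ∫ x, f x = 1) (u : ℝ) : ‖FT f u‖ ≤ 1 := by
  have := isProbabilityMeasure_withDensity_ofReal hf hnn hmass
  rw [FT_eq_charFun hf hnn]
  exact norm_charFun_le_one u

theorem ae_eq_of_FT_eq {f g : ℝ → ℝ} (hf : Integrable f) (hg : Integrable g)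
    (hf_nn : ∀ x, 0 ≤ f x) (hg_nn : ∀ x, 0 ≤ g x) (h : FT f = FT g) : f =ᵐ[volume] g := by
  have := isFiniteMeasure_withDensity_ofReal hf.2
  have := isFiniteMeasure_withDensity_ofReal hg.2
  rw [FT_eq_charFun hf hf_nn, FT_eq_charFun hg hg_nn] at h
  have hofReal := (withDensity_eq_iff_of_sigmaFinite hf.aemeasurable.ennreal_ofReal
    hg.aemeasurable.ennreal_ofReal).1 (Measure.ext_of_charFun h)
  filter_upwards [hofReal] with x hx
  exact (ENNReal.ofReal_eq_ofReal_iff (hf_nn x) (hg_nn x)).1 hx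

theorem convolution_model_identifiability_general
    (f₁ f₂ : ℝ → ℝ)
    (hf₁_int : Integrable f₁) (hf₂_int : Integrable f₂)
    (hf₁_nonneg : ∀ x, 0 ≤ f₁ x) (hf₂_nonneg : ∀ x, 0 ≤ f₂ x)
    (hf₁_mass : ∫ x : ℝ, f₁ x = 1) (hf₂_mass : ∫ x : ℝ, f₂ x = 1)
    (A₁ β₁' u₁ : ℝ) (hA₁ : 0 < A₁)
    (hfA₁ : ∀ u : ℝ, u₁ ≤ |u| → A₁ * |u| ^ (-β₁') ≤ ‖FT f₁ u‖)
    (A₂ β₂' u₂ : ℝ) (hA₂ : 0 < A₂)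
    (hfA₂ : ∀ u : ℝ, u₂ ≤ |u| → A₂ * |u| ^ (-β₂') ≤ ‖FT f₂ u‖)
    (s₁ s₂ γ₁ γ₂ : ℝ)
    (hs₁ : s₁ ∈ Set.Ioc (0 : ℝ) 2) (hs₂ : s₂ ∈ Set.Ioc (0 : ℝ) 2)
    (hγ₁ : 0 < γ₁) (hγ₂ : 0 < γ₂)
    (heq : ∀ u : ℝ,
      FT f₁ u * Real.exp (-|γ₁ * u| ^ s₁) = FT f₂ u * Real.exp (-|γ₂ * u| ^ s₂)) :
    s₁ = s₂ ∧ γ₁ = γ₂ ∧ (∀ u : ℝ, FT f₁ u = FT f₂ u) ∧ f₁ =ᵐ[volume] f₂ := by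
  obtain ⟨hs_le, hγ_le⟩ := le_and_le_of_eventually_rpow_le hs₂.1 hγ₁ hγ₂ <|
    eventually_rpow_le_of_mul_exp_eq hA₁ hfA₁ (norm_FT_le_one hf₂_int hf₂_nonneg hf₂_mass)
      hγ₁ hγ₂ heq
  obtain ⟨hs_ge, hγ_ge⟩ := le_and_le_of_eventually_rpow_le hs₁.1 hγ₂ hγ₁ <|
    eventually_rpow_le_of_mul_exp_eq hA₂ hfA₂ (norm_FT_le_one hf₁_int hf₁_nonneg hf₁_mass)
      hγ₂ hγ₁ fun u => (heq u).symm
  have hs : s₁ = s₂ := le_antisymm hs_ge hs_le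
  have hγ : γ₁ = γ₂ := le_antisymm (hγ_ge hs) (hγ_le hs.symm)
  have hFT : ∀ u, FT f₁ u = FT f₂ u := fun u =>
    mul_right_cancel₀ (ofReal_ne_zero.2 (exp_pos _).ne') (hs ▸ hγ ▸ heq u)
  exact ⟨hs, hγ, hFT, ae_eq_of_FT_eq hf₁_int hf₂_int hf₁_nonneg hf₂_nonneg (funext hFT)⟩

/-- Identifiability of the semiparametric convolution model: if two probability densities
`f₁, f₂`, each satisfying Assumption (A), and parameters `s₁, s₂ ∈ (0,2]`, `γ₁, γ₂ > 0`
produce the same Fourier transform of the observations, i.e.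
`Φ^{f₁}(u) e^{-|γ₁ u|^{s₁}} = Φ^{f₂}(u) e^{-|γ₂ u|^{s₂}}` for all `u`, then
`s₁ = s₂`, `γ₁ = γ₂`, `Φ^{f₁} = Φ^{f₂}` and hence `f₁ = f₂` almost everywhere. -/
theorem convolution_model_identifiability
    (f₁ f₂ : ℝ → ℝ)
    (hf₁_int : Integrable f₁) (hf₂_int : Integrable f₂)
    (hf₁_nonneg : ∀ x, 0 ≤ f₁ x) (hf₂_nonneg : ∀ x, 0 ≤ f₂ x)
    (hf₁_mass : ∫ x : ℝ, f₁ x = 1) (hf₂_mass : ∫ x : ℝ, f₂ x = 1)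
    (A₁ β₁' u₁ : ℝ) (hA₁ : 0 < A₁) (hβ₁' : 0 < β₁') (hu₁ : 0 < u₁)
    (hfA₁ : ∀ u : ℝ, u₁ ≤ |u| → A₁ * |u| ^ (-β₁') ≤ ‖FT f₁ u‖)
    (A₂ β₂' u₂ : ℝ) (hA₂ : 0 < A₂) (hβ₂' : 0 < β₂') (hu₂ : 0 < u₂)
    (hfA₂ : ∀ u : ℝ, u₂ ≤ |u| → A₂ * |u| ^ (-β₂') ≤ ‖FT f₂ u‖)
    (s₁ s₂ γ₁ γ₂ : ℝ)
    (hs₁ : s₁ ∈ Set.Ioc (0 : ℝ) 2) (hs₂ : s₂ ∈ Set.Ioc (0 : ℝ) 2)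
    (hγ₁ : 0 < γ₁) (hγ₂ : 0 < γ₂)
    (heq : ∀ u : ℝ,
      FT f₁ u * Real.exp (-|γ₁ * u| ^ s₁) = FT f₂ u * Real.exp (-|γ₂ * u| ^ s₂)) :
    s₁ = s₂ ∧ γ₁ = γ₂ ∧ (∀ u : ℝ, FT f₁ u = FT f₂ u) ∧ f₁ =ᵐ[volume] f₂ :=
  convolution_model_identifiability_general f₁ f₂ hf₁_int hf₂_int hf₁_nonneg hf₂_nonneg hf₁_mass
    hf₂_mass A₁ β₁' u₁ hA₁ hfA₁ A₂ β₂' u₂ hA₂ hfA₂ s₁ s₂ γ₁ γ₂ hs₁ hs₂ hγ₁ hγ₂ heq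
end

section
/- First inequality of Lemma 1: Fix 0 < s̲ ≤ s̄ ≤ 2, A > 0, β' > 0, δ > β' and c > 2β'. For each integer n ≥ 3 let σ(n), τ(n) ∈ [s̲, s̄] satisfy τ(n) − σ(n) ≥ c/log n, and set u_n = ( (log n)/2 − (δ/σ(n))·log log n )^{1/σ(n)}. Then A^{−1} u_n^{β'} exp( u_n^{σ(n)} − u_n^{τ(n)} ) → 0 as n → ∞; equivalently, (1/2)( A u_n^{−β'} e^{−u_n^{σ(n)}} − e^{−u_n^{τ(n)}} ) ≥ (1/2) A u_n^{−β'} e^{−u_n^{σ(n)}} (1 + o(1)). -/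
/-!
Write `v = u^σ = (log n)/2 - (δ/σ) log log n`, so that `u^β' = v^{β'/σ}` and `u^τ = v^{τ/σ}`.
Since `v^t ≥ 1 + t log v`, one gets `u^τ ≥ v (1 + ((τ - σ)/σ) log v)`, whence
`u^β' exp(u^σ - u^τ) ≤ exp((β' - v (τ - σ)) log v / σ)`.
As `δ/σ` stays bounded, `v / log n → 1/2`, so the gap condition gives `v (τ - σ) ≥ c v / log n`,
which eventually exceeds some `m > β'`; the bound is then at most `v^{-(m - β')/s̄} → 0`.
-/

open Filter Real Asymptotics Topology

lemma Real.one_add_mul_log_le_rpow {v : ℝ} (hv : 0 < v) (t : ℝ) : 1 + t * log v ≤ v ^ t := by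
  rw [rpow_def_of_pos hv, mul_comm t]
  linarith [add_one_le_exp (log v * t)]

lemma Real.rpow_one_div_mul_exp_sub_le {v σ τ β : ℝ} (hv : 0 < v) (hσ : 0 < σ) :
    (v ^ (1 / σ)) ^ β * exp ((v ^ (1 / σ)) ^ σ - (v ^ (1 / σ)) ^ τ)
      ≤ exp ((β - v * (τ - σ)) * log v / σ) := by
  have hpow (x : ℝ) : (v ^ (1 / σ)) ^ x = v ^ (x / σ) := by
    rw [← rpow_mul hv.le, one_div_mul_eq_div]
  have hτ : v * (1 + (τ - σ) / σ * log v) ≤ v ^ (τ / σ) := by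
    have hsplit : τ / σ = 1 + (τ - σ) / σ := by field_simp; ring
    rw [hsplit, rpow_add hv, rpow_one]
    exact mul_le_mul_of_nonneg_left (one_add_mul_log_le_rpow hv _) hv.le
  rw [hpow, hpow, hpow, div_self hσ.ne', rpow_one, rpow_def_of_pos hv, ← exp_add, exp_le_exp]
  have hexp : (β - v * (τ - σ)) * log v / σ
      = log v * (β / σ) + (v - v * (1 + (τ - σ) / σ * log v)) := by
    field_simp; ring
  linarith

lemma Real.rpow_one_div_mul_exp_sub_le_rpow {v σ τ β m s : ℝ} (hv : 1 ≤ v) (hσ : 0 < σ)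
    (hσs : σ ≤ s) (hβm : β ≤ m) (hm : m ≤ v * (τ - σ)) :
    (v ^ (1 / σ)) ^ β * exp ((v ^ (1 / σ)) ^ σ - (v ^ (1 / σ)) ^ τ) ≤ v ^ (-((m - β) / s)) := by
  have hv0 : 0 < v := one_pos.trans_le hv
  refine (rpow_one_div_mul_exp_sub_le hv0 hσ).trans ?_
  rw [rpow_def_of_pos hv0, exp_le_exp, mul_comm (log v), mul_div_right_comm]
  refine mul_le_mul_of_nonneg_right ?_ (log_nonneg hv)
  calc (β - v * (τ - σ)) / σ ≤ -((m - β) / σ) := by rw [← neg_div]; gcongr; linarith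
    _ ≤ -((m - β) / s) := by gcongr

lemma isBigO_const_div_one {α : Type*} {l : Filter α} {σ : α → ℝ} {s : ℝ} (hs : 0 < s)
    (hσ : ∀ᶠ x in l, s ≤ σ x) (δ : ℝ) : (fun x => δ / σ x) =O[l] (fun _ => (1 : ℝ)) := by
  refine IsBigO.of_bound (|δ| / s) ?_
  filter_upwards [hσ] with x hx
  rw [norm_one, mul_one, norm_div, Real.norm_eq_abs, Real.norm_eq_abs, abs_of_pos (hs.trans_le hx)]
  exact div_le_div_of_nonneg_left (abs_nonneg δ) hs hx

section HalfMinusLogLog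

variable {α : Type*} {l : Filter α} {a g : α → ℝ}

lemma tendsto_half_sub_mul_log_div (ha : a =O[l] (fun _ => (1 : ℝ))) (hg : Tendsto g l atTop) :
    Tendsto (fun x => (g x / 2 - a x * log (g x)) / g x) l (𝓝 (1 / 2)) := by
  have h := ha.mul_isLittleO (isLittleO_log_id_atTop.comp_tendsto hg)
  simp only [one_mul] at h
  have h0 := h.tendsto_div_nhds_zero.const_sub (1 / 2 : ℝ)
  rw [sub_zero] at h0
  refine h0.congr' ?_
  filter_upwards [hg.eventually_gt_atTop 0] with x hx
  simp only [Function.comp_apply, id_eq]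
  field_simp

lemma tendsto_half_sub_mul_log_atTop (ha : a =O[l] (fun _ => (1 : ℝ))) (hg : Tendsto g l atTop) :
    Tendsto (fun x => g x / 2 - a x * log (g x)) l atTop := by
  refine ((tendsto_half_sub_mul_log_div ha hg).pos_mul_atTop one_half_pos hg).congr' ?_
  filter_upwards [hg.eventually_gt_atTop 0] with x hx
  field_simp

end HalfMinusLogLog

theorem lemma1_first_inequality_general
    (sl sb A β' δ c : ℝ)
    (hsl : 0 < sl) (hslb : sl ≤ sb)
    (hc : 2 * β' < c)
    (σ τ : ℕ → ℝ)
    (hσ : ∀ n : ℕ, 3 ≤ n → σ n ∈ Set.Icc sl sb)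
    (hgap : ∀ n : ℕ, 3 ≤ n → c / Real.log n ≤ τ n - σ n)
    (u : ℕ → ℝ)
    (hu : ∀ n : ℕ, 3 ≤ n →
      u n = (Real.log n / 2 - (δ / σ n) * Real.log (Real.log n)) ^ (1 / σ n)) :
    Tendsto
      (fun n : ℕ => A⁻¹ * (u n) ^ β' * Real.exp ((u n) ^ (σ n) - (u n) ^ (τ n)))
      atTop (nhds 0) := by
  set L : ℕ → ℝ := fun n => log n
  set v : ℕ → ℝ := fun n => L n / 2 - δ / σ n * log (L n)
  have hL : Tendsto L atTop atTop := tendsto_log_atTop.comp tendsto_natCast_atTop_atTop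
  have hbdd : (fun n => δ / σ n) =O[atTop] (fun _ => (1 : ℝ)) :=
    isBigO_const_div_one hsl ((eventually_ge_atTop 3).mono fun n hn => (hσ n hn).1) δ
  have hv : Tendsto v atTop atTop := tendsto_half_sub_mul_log_atTop hbdd hL
  obtain ⟨m, hβm, hmc⟩ : ∃ m, β' < m ∧ m < c * (1 / 2) := exists_between (by linarith)
  suffices h : Tendsto (fun n => u n ^ β' * exp (u n ^ σ n - u n ^ τ n)) atTop (𝓝 0) by
    simpa only [mul_assoc, mul_zero] using h.const_mul A⁻¹
  refine squeeze_zero' ?_ ?_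
    ((tendsto_rpow_neg_atTop (div_pos (sub_pos.2 hβm) (hsl.trans_le hslb))).comp hv)
  · filter_upwards [hv.eventually_ge_atTop 0, eventually_ge_atTop 3] with n hv0 hn
    have : 0 ≤ u n := (hu n hn).symm ▸ rpow_nonneg hv0 _
    positivity
  · filter_upwards [hv.eventually_ge_atTop 1, hL.eventually_gt_atTop 0, eventually_ge_atTop 3,
      ((tendsto_half_sub_mul_log_div hbdd hL).const_mul c).eventually_const_lt hmc]
      with n hv1 hLn hn hm
    have hvgap : m ≤ v n * (τ n - σ n) :=
      calc m ≤ c * (v n / L n) := hm.le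
        _ = v n * (c / L n) := by ring
        _ ≤ v n * (τ n - σ n) := mul_le_mul_of_nonneg_left (hgap n hn) (by linarith)
    rw [hu n hn]
    exact rpow_one_div_mul_exp_sub_le_rpow hv1 (hsl.trans_le (hσ n hn).1) (hσ n hn).2 hβm.le hvgap

/-- First inequality of Lemma 1 (Butucea–Matias–Pouet): with grid points
`σ n < τ n` in `[s̲, s̄] ⊆ (0, 2]` separated by at least `c / log n` (`c > 2β'`),
and `u_n = ((log n)/2 - (δ/σ n) log log n)^{1/σ n}` with `δ > β'`, one has
`A⁻¹ u_n^{β'} exp(u_n^{σ n} - u_n^{τ n}) → 0`, i.e.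
`(1/2)(A u_n^{-β'} e^{-u_n^{σ n}} - e^{-u_n^{τ n}}) ≥ (1/2) A u_n^{-β'} e^{-u_n^{σ n}} (1 + o(1))`. -/
theorem lemma1_first_inequality
    (sl sb A β' δ c : ℝ)
    (hsl : 0 < sl) (hslb : sl ≤ sb) (hsb : sb ≤ 2)
    (hA : 0 < A) (hβ' : 0 < β') (hδ : β' < δ) (hc : 2 * β' < c)
    (σ τ : ℕ → ℝ)
    (hσ : ∀ n : ℕ, 3 ≤ n → σ n ∈ Set.Icc sl sb)
    (hτ : ∀ n : ℕ, 3 ≤ n → τ n ∈ Set.Icc sl sb)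
    (hgap : ∀ n : ℕ, 3 ≤ n → c / Real.log n ≤ τ n - σ n)
    (u : ℕ → ℝ)
    (hu : ∀ n : ℕ, 3 ≤ n →
      u n = (Real.log n / 2 - (δ / σ n) * Real.log (Real.log n)) ^ (1 / σ n)) :
    Tendsto
      (fun n : ℕ => A⁻¹ * (u n) ^ β' * Real.exp ((u n) ^ (σ n) - (u n) ^ (τ n)))
      atTop (nhds 0) :=
  lemma1_first_inequality_general sl sb A β' δ c hsl hslb hc σ τ hσ hgap u hu
end
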